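/- Let X be a smooth 4-manifold. In local coordinates x¹,…,x⁴, define on the odd bundle SX = Π((X×ℝ) ⊕ TX ⊕ Λ²₊TX) the odd vector fields D₀ = ∂_θ - θⁱ∂_{xⁱ} and Q₀ = ∂_θ + θⁱ∂_{xⁱ}, and the 1-form-valued odd vector fields D₁ = ∂_{θⁱ}dxⁱ - θ ∂_{xⁱ}dxⁱ - M and Q₁ = ∂_{θⁱ}dxⁱ + θ ∂_{xⁱ}dxⁱ + M (with M the canonical element defined below). Then with the bracket [A,B] = ½(AB - (-1)^{π(A)π(B)}BA), one has [D₀, D₁] = -d and [Q₀, Q₁] = d, where d is the de Rham differential under the identification of functions on the ΠTX component with differential forms. -/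

import Mathlib

/-! The odd derivatives `∂_{θ_a}` and the multiplications `θ_b` satisfy the canonical
anticommutation relations `{∂_a, ∂_b} = 0`, `{θ_a, θ_b} = 0`, `{∂_a, θ_b} = δ_ab`, and commute
with the even derivatives `∂_v`. Hence any two operators in the span of the `θ_b ∂_v`
anticommute, and `∂_a` anticommutes with those having `b ≠ a`.

Write `D₀ = ∂_θ + s B`, `D₁ = ∂_{θⁱ} + s N` with `B = θᵏ ∂_k` and `N = θ ∂_i + M`, where
`s = -1` for `D` and `s = 1` for `Q`. Expanding, `{D₀, D₁} = s ({∂_θ, N} + {B, ∂_{θⁱ}})`, and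
both anticommutators equal `∂_i`: `M` involves only the coordinates of `ΠΛ²₊TX`, so
`∂_θ` anticommutes with it. -/

open MvPolynomial

noncomputable section

/-- The coordinate superalgebra of a superspace with even coordinates indexed by `σ` and
`m` odd coordinates: an element assigns to each odd monomial `θ^S` (`S ⊆ Fin m`, indices
in increasing order) a polynomial coefficient in the even coordinates. -/
abbrev SAlg (σ : Type) (m : ℕ) := Finset (Fin m) → MvPolynomial σ ℝ

/-- The even partial derivative `∂/∂y_v`. -/
def evD {σ : Type} {m : ℕ} (v : σ) (f : SAlg σ m) : SAlg σ m :=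
  fun S => MvPolynomial.pderiv v (f S)

/-- The sign `(-1)^{#{j ∈ S : j < i}}` of anticommuting `θ_i` into the monomial `θ^S`. -/
def osgn {m : ℕ} (i : Fin m) (S : Finset (Fin m)) : ℝ :=
  (-1) ^ (S.filter (fun j => j < i)).card

/-- The odd partial derivative `∂/∂θ_i`. -/
def oddD {σ : Type} {m : ℕ} (i : Fin m) (f : SAlg σ m) : SAlg σ m :=
  fun S => if i ∈ S then 0 else osgn i S • f (insert i S)

/-- Left multiplication by the odd coordinate `θ_i`. -/
def oddM {σ : Type} {m : ℕ} (i : Fin m) (f : SAlg σ m) : SAlg σ m :=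
  fun S => if i ∈ S then osgn i (S.erase i) • f (S.erase i) else 0

/-- The coordinate superalgebra of `SX = Π((X×ℝ) ⊕ TX ⊕ Λ²₊TX)` over a coordinate patch:
4 even coordinates `x¹,…,x⁴`, and 8 odd coordinates: `θ` (index 0), `θⁱ` (indices 1–4),
and `θ^{1234}, θ^{1324}, θ^{1423}` (indices 5–7). -/
abbrev ASX := SAlg (Fin 4) 8

/-- index of the odd coordinate `θ` on the trivial factor -/
def th : Fin 8 := 0

/-- index of `θⁱ` -/
def thv (i : Fin 4) : Fin 8 := ⟨1 + i.val, by omega⟩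

/-- indices of `θ^{1234}, θ^{1324}, θ^{1423}` -/
def thp (α : Fin 3) : Fin 8 := ⟨5 + α.val, by omega⟩

/-- The components of the canonical element
`M = θ^{1234}⊗(∂₁dx²-∂₂dx¹+∂₃dx⁴-∂₄dx³) + θ^{1324}⊗(∂₁dx³-∂₃dx¹-∂₂dx⁴+∂₄dx²)
   + θ^{1423}⊗(∂₁dx⁴-∂₄dx¹+∂₂dx³-∂₃dx²)` along `dx¹, …, dx⁴`. -/
def Mop : Fin 4 → ASX → ASX :=
  ![fun f => -(oddM (thp 0) (evD 1 f)) - oddM (thp 1) (evD 2 f) - oddM (thp 2) (evD 3 f),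
    fun f => oddM (thp 0) (evD 0 f) - oddM (thp 1) (evD 3 f) + oddM (thp 2) (evD 2 f),
    fun f => -(oddM (thp 0) (evD 3 f)) + oddM (thp 1) (evD 0 f) + oddM (thp 2) (evD 1 f),
    fun f => oddM (thp 0) (evD 2 f) - oddM (thp 1) (evD 1 f) + oddM (thp 2) (evD 0 f)]

/-- `D₀ = ∂_θ - θⁱ ∂_{xⁱ}` -/
def D0 (f : ASX) : ASX := oddD th f - ∑ i : Fin 4, oddM (thv i) (evD i f)

/-- `Q₀ = ∂_θ + θⁱ ∂_{xⁱ}` -/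
def Q0 (f : ASX) : ASX := oddD th f + ∑ i : Fin 4, oddM (thv i) (evD i f)

/-- the `dxⁱ`-component of `D₁ = ∂_{θⁱ} dxⁱ - θ ∂_{xⁱ} dxⁱ - M` -/
def D1 (i : Fin 4) (f : ASX) : ASX := oddD (thv i) f - oddM th (evD i f) - Mop i f

/-- the `dxⁱ`-component of `Q₁ = ∂_{θⁱ} dxⁱ + θ ∂_{xⁱ} dxⁱ + M` -/
def Q1 (i : Fin 4) (f : ASX) : ASX := oddD (thv i) f + oddM th (evD i f) + Mop i f


lemma MvPolynomial.pderiv_comm {R σ : Type*} [CommRing R] (v w : σ)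
    (p : MvPolynomial σ R) : pderiv v (pderiv w p) = pderiv w (pderiv v p) := by
  classical
  have h : ⁅(pderiv v : Derivation R (MvPolynomial σ R) _), pderiv w⁆ = 0 :=
    derivation_ext fun k => by
      rw [Derivation.commutator_apply, pderiv_X, pderiv_X]
      simp [Pi.single_apply, apply_ite]
  simpa [Derivation.commutator_apply, sub_eq_zero] using congr($h p)

section OddCoordinates

variable {σ : Type} {m : ℕ}

lemma osgn_insert_of_lt {i j : Fin m} {T : Finset (Fin m)} (h : j < i) (hj : j ∉ T) :
    osgn i (insert j T) = -osgn i T := by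
  rw [osgn, osgn, Finset.filter_insert, if_pos h,
    Finset.card_insert_of_notMem (by simp [hj]), pow_succ, mul_neg_one]

lemma osgn_insert_of_gt {i j : Fin m} {T : Finset (Fin m)} (h : i < j) :
    osgn i (insert j T) = osgn i T := by
  rw [osgn, osgn, Finset.filter_insert, if_neg h.not_gt]

lemma osgn_mul_self (i : Fin m) (S : Finset (Fin m)) : osgn i S * osgn i S = 1 := by
  rw [osgn, ← mul_pow, neg_one_mul, neg_neg, one_pow]

lemma osgn_insert_mul_add_swap {i j : Fin m} {T : Finset (Fin m)} (hij : i ≠ j) (hi : i ∉ T)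
    (hj : j ∉ T) : osgn i (insert j T) * osgn j T + osgn j (insert i T) * osgn i T = 0 := by
  rcases hij.lt_or_gt with h | h
  · rw [osgn_insert_of_gt h, osgn_insert_of_lt h hi]; ring
  · rw [osgn_insert_of_lt h hj, osgn_insert_of_gt h]; ring

lemma osgn_insert_mul_osgn_insert_add {i j : Fin m} {T : Finset (Fin m)} (hij : i ≠ j)
    (hi : i ∉ T) (hj : j ∉ T) :
    osgn i (insert j T) * osgn j (insert i T) + osgn j T * osgn i T = 0 := by
  rcases hij.lt_or_gt with h | h
  · rw [osgn_insert_of_gt h, osgn_insert_of_lt h hi]; ring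
  · rw [osgn_insert_of_lt h hj, osgn_insert_of_gt h]; ring

def oddDₗ (i : Fin m) : Module.End ℝ (SAlg σ m) where
  toFun := oddD i
  map_add' f g := funext fun S => by by_cases h : i ∈ S <;> simp [oddD, h]
  map_smul' c f := funext fun S => by by_cases h : i ∈ S <;> simp [oddD, h, smul_comm c]

def oddMₗ (i : Fin m) : Module.End ℝ (SAlg σ m) where
  toFun := oddM i
  map_add' f g := funext fun S => by by_cases h : i ∈ S <;> simp [oddM, h]
  map_smul' c f := funext fun S => by by_cases h : i ∈ S <;> simp [oddM, h, smul_comm c]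

def evDₗ (v : σ) : Module.End ℝ (SAlg σ m) where
  toFun := evD v
  map_add' f g := funext fun S => by simp [evD]
  map_smul' c f := funext fun S => by simp [evD]

lemma coe_oddDₗ (i : Fin m) : ⇑(oddDₗ i : Module.End ℝ (SAlg σ m)) = oddD i := rfl

lemma coe_oddMₗ (i : Fin m) : ⇑(oddMₗ i : Module.End ℝ (SAlg σ m)) = oddM i := rfl

lemma coe_evDₗ (v : σ) : ⇑(evDₗ v : Module.End ℝ (SAlg σ m)) = evD v := rfl

@[simp] lemma oddDₗ_apply (i : Fin m) (f : SAlg σ m) (S : Finset (Fin m)) :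
    oddDₗ i f S = if i ∈ S then 0 else osgn i S • f (insert i S) := rfl

@[simp] lemma oddMₗ_apply (i : Fin m) (f : SAlg σ m) (S : Finset (Fin m)) :
    oddMₗ i f S = if i ∈ S then osgn i (S.erase i) • f (S.erase i) else 0 := rfl

@[simp] lemma evDₗ_apply (v : σ) (f : SAlg σ m) (S : Finset (Fin m)) :
    evDₗ v f S = pderiv v (f S) := rfl

lemma oddDₗ_anticomm (i j : Fin m) :
    oddDₗ i * oddDₗ j + oddDₗ j * oddDₗ i = (0 : Module.End ℝ (SAlg σ m)) := by
  refine LinearMap.ext fun f => funext fun S => ?_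
  simp only [LinearMap.add_apply, Pi.add_apply, Module.End.mul_apply, oddDₗ_apply,
    LinearMap.zero_apply, Pi.zero_apply]
  obtain rfl | hij := eq_or_ne i j
  · by_cases hi : i ∈ S <;> simp [hi]
  by_cases hi : i ∈ S <;> by_cases hj : j ∈ S
  · simp [hi, hj]
  · simp [hi, hj, hij]
  · simp [hi, hj, hij.symm]
  · simp only [hi, hj, Finset.mem_insert, hij, hij.symm, or_false, if_false, smul_smul,
      Finset.insert_comm j i, ← add_smul]
    convert zero_smul ℝ _
    linear_combination osgn_insert_mul_add_swap hij hi hj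

lemma oddMₗ_anticomm (i j : Fin m) :
    oddMₗ i * oddMₗ j + oddMₗ j * oddMₗ i = (0 : Module.End ℝ (SAlg σ m)) := by
  refine LinearMap.ext fun f => funext fun S => ?_
  simp only [LinearMap.add_apply, Pi.add_apply, Module.End.mul_apply, oddMₗ_apply,
    LinearMap.zero_apply, Pi.zero_apply]
  obtain rfl | hij := eq_or_ne i j
  · by_cases hi : i ∈ S <;> simp [hi]
  by_cases hi : i ∈ S <;> by_cases hj : j ∈ S
  · set T := (S.erase i).erase j with hT
    have hjT : S.erase i = insert j T := (Finset.insert_erase (by simp [hij.symm, hj])).symm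
    have hiT : S.erase j = insert i T := by
      rw [hT, Finset.erase_right_comm]; exact (Finset.insert_erase (by simp [hij, hi])).symm
    have hi' : i ∉ T := by simp [hT]
    have hj' : j ∉ T := by simp [hT]
    simp only [hi, hj, hjT, hiT, Finset.mem_insert_self, if_true, Finset.erase_insert hi',
      smul_smul, ← add_smul]
    convert zero_smul ℝ _
    linear_combination osgn_insert_mul_add_swap hij hi' hj'
  · simp [hi, hj]
  · simp [hi, hj]
  · simp [hi, hj]

lemma oddDₗ_anticomm_oddMₗ (i j : Fin m) :
    oddDₗ i * oddMₗ j + oddMₗ j * oddDₗ i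
      = (if i = j then 1 else 0 : Module.End ℝ (SAlg σ m)) := by
  refine LinearMap.ext fun f => funext fun S => ?_
  simp only [LinearMap.add_apply, Pi.add_apply, Module.End.mul_apply, oddMₗ_apply,
    oddDₗ_apply]
  obtain rfl | hij := eq_or_ne i j
  · by_cases hi : i ∈ S <;> simp [hi, smul_smul, osgn_mul_self]
  rw [if_neg hij, LinearMap.zero_apply, Pi.zero_apply]
  by_cases hi : i ∈ S <;> by_cases hj : j ∈ S
  · simp [hi, hj, hij]
  · simp [hi, hj]
  · set T := S.erase j with hT
    have hi' : i ∉ T := by simp [hT, hi]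
    have hj' : j ∉ T := by simp [hT]
    have hiS : insert i S = insert j (insert i T) := by
      rw [Finset.insert_comm, hT, Finset.insert_erase hj]
    have hS : S = insert j T := (Finset.insert_erase hj).symm
    simp only [hi, hj, hi', hiS, Finset.mem_insert_self, if_true, if_false,
      Finset.erase_insert (show j ∉ insert i T by simp [hij.symm, hj']), smul_smul, ← add_smul]
    rw [hS]
    convert zero_smul ℝ _
    linear_combination osgn_insert_mul_osgn_insert_add hij hi' hj'
  · simp [hi, hj, hij.symm]

lemma evDₗ_commute_oddDₗ (v : σ) (i : Fin m) :
    Commute (evDₗ v : Module.End ℝ (SAlg σ m)) (oddDₗ i) :=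
  LinearMap.ext fun f => funext fun S => by by_cases h : i ∈ S <;> simp [h]

lemma evDₗ_commute_oddMₗ (v : σ) (i : Fin m) :
    Commute (evDₗ v : Module.End ℝ (SAlg σ m)) (oddMₗ i) :=
  LinearMap.ext fun f => funext fun S => by by_cases h : i ∈ S <;> simp [h]

lemma evDₗ_commute_evDₗ (v w : σ) : Commute (evDₗ v : Module.End ℝ (SAlg σ m)) (evDₗ w) :=
  LinearMap.ext fun f => funext fun S => by simp [pderiv_comm]

end OddCoordinates

section Anticommutators

variable {K R : Type*} [CommRing K] [Ring R] [Algebra K R]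

lemma anticomm_eq_zero_of_mem_span {s : Set R} {a x : R} (h : ∀ y ∈ s, a * y + y * a = 0)
    (hx : x ∈ Submodule.span K s) : a * x + x * a = 0 := by
  induction hx using Submodule.span_induction with
  | mem y hy => exact h y hy
  | zero => simp
  | add y z _ _ hy hz => rw [mul_add, add_mul, add_add_add_comm, hy, hz, add_zero]
  | smul c y _ hy => rw [mul_smul_comm, smul_mul_assoc, ← smul_add, hy, smul_zero]

lemma add_smul_anticomm (s : K) {a b B N x y : R} (hab : a * b + b * a = 0)
    (haN : a * N + N * a = x) (hBb : B * b + b * B = y) (hBN : B * N + N * B = 0) :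
    (a + s • B) * (b + s • N) + (b + s • N) * (a + s • B) = s • (x + y) := by
  have expand : (a + s • B) * (b + s • N) + (b + s • N) * (a + s • B)
      = (a * b + b * a) + s • (a * N + N * a) + s • (B * b + b * B)
        + (s * s) • (B * N + N * B) := by
    simp only [mul_add, add_mul, smul_mul_assoc, mul_smul_comm, smul_add, smul_smul]
    abel
  rw [expand, hab, haN, hBb, hBN, smul_zero, add_zero, zero_add, smul_add]

end Anticommutators

section ThetaDerivSpan

variable {σ : Type} {m : ℕ}

lemma oddDₗ_anticomm_oddMₗ_mul_evDₗ (a b : Fin m) (v : σ) :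
    oddDₗ a * (oddMₗ b * evDₗ v) + oddMₗ b * evDₗ v * oddDₗ a
      = (if a = b then evDₗ v else 0 : Module.End ℝ (SAlg σ m)) := by
  rw [mul_assoc (oddMₗ b), (evDₗ_commute_oddDₗ v a).eq, ← mul_assoc, ← mul_assoc, ← add_mul,
    oddDₗ_anticomm_oddMₗ]
  split_ifs <;> simp

lemma oddMₗ_mul_evDₗ_anticomm (b b' : Fin m) (v v' : σ) :
    oddMₗ b * evDₗ v * (oddMₗ b' * evDₗ v') + oddMₗ b' * evDₗ v' * (oddMₗ b * evDₗ v)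
      = (0 : Module.End ℝ (SAlg σ m)) := by
  rw [(evDₗ_commute_oddMₗ v b').mul_mul_mul_comm, (evDₗ_commute_oddMₗ v' b).mul_mul_mul_comm,
    (evDₗ_commute_evDₗ v' v).eq, ← add_mul, oddMₗ_anticomm, zero_mul]

variable (σ) in
def thetaDerivSpan (S : Set (Fin m)) : Submodule ℝ (Module.End ℝ (SAlg σ m)) :=
  Submodule.span ℝ (Set.image2 (fun b v => oddMₗ b * evDₗ v) S Set.univ)

lemma oddMₗ_mul_evDₗ_mem {S : Set (Fin m)} {b : Fin m} (hb : b ∈ S) (v : σ) :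
    oddMₗ b * evDₗ v ∈ thetaDerivSpan σ S :=
  Submodule.subset_span (Set.mem_image2_of_mem hb (Set.mem_univ v))

lemma thetaDerivSpan_mono {S S' : Set (Fin m)} (h : S ⊆ S') :
    thetaDerivSpan σ S ≤ thetaDerivSpan σ S' :=
  Submodule.span_mono (Set.image2_subset_right h)

lemma oddDₗ_anticomm_of_mem_thetaDerivSpan {S : Set (Fin m)} {a : Fin m} (ha : a ∉ S)
    {X : Module.End ℝ (SAlg σ m)} (hX : X ∈ thetaDerivSpan σ S) :
    oddDₗ a * X + X * oddDₗ a = 0 := by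
  refine anticomm_eq_zero_of_mem_span (fun Y hY => ?_) hX
  obtain ⟨b, hb, v, -, rfl⟩ := hY
  rw [oddDₗ_anticomm_oddMₗ_mul_evDₗ, if_neg (ne_of_mem_of_not_mem hb ha).symm]

lemma anticomm_of_mem_thetaDerivSpan {S S' : Set (Fin m)} {X Y : Module.End ℝ (SAlg σ m)}
    (hX : X ∈ thetaDerivSpan σ S) (hY : Y ∈ thetaDerivSpan σ S') : X * Y + Y * X = 0 := by
  refine anticomm_eq_zero_of_mem_span (fun Z hZ => ?_) hY
  obtain ⟨b', -, v', -, rfl⟩ := hZ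
  rw [add_comm]
  refine anticomm_eq_zero_of_mem_span (fun W hW => ?_) hX
  obtain ⟨b, -, v, -, rfl⟩ := hW
  exact oddMₗ_mul_evDₗ_anticomm b' b v' v

end ThetaDerivSpan

def Mopₗ : Fin 4 → Module.End ℝ ASX :=
  ![-(oddMₗ (thp 0) * evDₗ 1) - oddMₗ (thp 1) * evDₗ 2 - oddMₗ (thp 2) * evDₗ 3,
    oddMₗ (thp 0) * evDₗ 0 - oddMₗ (thp 1) * evDₗ 3 + oddMₗ (thp 2) * evDₗ 2,
    -(oddMₗ (thp 0) * evDₗ 3) + oddMₗ (thp 1) * evDₗ 0 + oddMₗ (thp 2) * evDₗ 1,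
    oddMₗ (thp 0) * evDₗ 2 - oddMₗ (thp 1) * evDₗ 1 + oddMₗ (thp 2) * evDₗ 0]

lemma Mopₗ_apply (i : Fin 4) (f : ASX) : Mopₗ i f = Mop i f := by
  fin_cases i <;> rfl

lemma Mopₗ_mem (i : Fin 4) : Mopₗ i ∈ thetaDerivSpan (Fin 4) (Set.range thp) := by
  have gen (α : Fin 3) (v : Fin 4) :
      oddMₗ (thp α) * evDₗ v ∈ thetaDerivSpan (Fin 4) (Set.range thp) :=
    oddMₗ_mul_evDₗ_mem (Set.mem_range_self α) v
  fin_cases i <;> simp only [Mopₗ] <;>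
    apply_rules [Submodule.add_mem, Submodule.sub_mem, Submodule.neg_mem]

lemma th_notMem_range_thp : th ∉ Set.range thp := by
  rintro ⟨α, h⟩
  simp only [th, thp, Fin.ext_iff, Fin.val_zero] at h
  omega

lemma thv_injective : Function.Injective thv := fun a b h => by
  simp only [thv, Fin.ext_iff] at h
  omega

def D0ₗ (s : ℝ) : Module.End ℝ ASX := oddDₗ th + s • ∑ k, oddMₗ (thv k) * evDₗ k

def D1ₗ (s : ℝ) (i : Fin 4) : Module.End ℝ ASX := oddDₗ (thv i) + s • (oddMₗ th * evDₗ i + Mopₗ i)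

lemma D0_eq (f : ASX) : D0 f = D0ₗ (-1) f := by
  simp [D0, D0ₗ, sub_eq_add_neg, coe_oddDₗ, coe_oddMₗ, coe_evDₗ]

lemma Q0_eq (f : ASX) : Q0 f = D0ₗ 1 f := by
  simp [Q0, D0ₗ, coe_oddDₗ, coe_oddMₗ, coe_evDₗ]

lemma D1_eq (i : Fin 4) (f : ASX) : D1 i f = D1ₗ (-1) i f := by
  simp [D1, D1ₗ, Mopₗ_apply, sub_eq_add_neg, add_assoc, coe_oddDₗ, coe_oddMₗ, coe_evDₗ]

lemma Q1_eq (i : Fin 4) (f : ASX) : Q1 i f = D1ₗ 1 i f := by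
  simp [Q1, D1ₗ, Mopₗ_apply, add_assoc, coe_oddDₗ, coe_oddMₗ, coe_evDₗ]

lemma D0ₗ_anticomm_D1ₗ (s : ℝ) (i : Fin 4) :
    D0ₗ s * D1ₗ s i + D1ₗ s i * D0ₗ s = s • (evDₗ i + evDₗ i) := by
  have hθN : oddDₗ th * (oddMₗ th * evDₗ i + Mopₗ i) + (oddMₗ th * evDₗ i + Mopₗ i) * oddDₗ th
      = evDₗ i := by
    rw [mul_add, add_mul, add_add_add_comm, oddDₗ_anticomm_oddMₗ_mul_evDₗ, if_pos rfl,
      oddDₗ_anticomm_of_mem_thetaDerivSpan th_notMem_range_thp (Mopₗ_mem i), add_zero]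
  have hBθv : (∑ k, oddMₗ (thv k) * evDₗ k) * oddDₗ (thv i)
      + oddDₗ (thv i) * ∑ k, oddMₗ (thv k) * evDₗ k = evDₗ i := by
    have term (k : Fin 4) : oddMₗ (thv k) * evDₗ k * oddDₗ (thv i)
        + oddDₗ (thv i) * (oddMₗ (thv k) * evDₗ k) = if i = k then evDₗ k else 0 := by
      rw [add_comm, oddDₗ_anticomm_oddMₗ_mul_evDₗ]
      simp only [thv_injective.eq_iff]
    simp only [Finset.sum_mul, Finset.mul_sum, ← Finset.sum_add_distrib, term,
      Finset.sum_ite_eq, Finset.mem_univ, if_true]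
  have hBN : (∑ k, oddMₗ (thv k) * evDₗ k) * (oddMₗ th * evDₗ i + Mopₗ i)
      + (oddMₗ th * evDₗ i + Mopₗ i) * ∑ k, oddMₗ (thv k) * evDₗ k = 0 :=
    anticomm_of_mem_thetaDerivSpan (S := Set.univ)
      (Submodule.sum_mem _ fun k _ => oddMₗ_mul_evDₗ_mem (Set.mem_univ _) k)
      (Submodule.add_mem _ (oddMₗ_mul_evDₗ_mem (Set.mem_univ _) i)
        (thetaDerivSpan_mono (Set.subset_univ _) (Mopₗ_mem i)))
  exact add_smul_anticomm s (oddDₗ_anticomm _ _) hθN hBθv hBN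

/-- with the bracket `[A,B] = ½(AB - (-1)^{π(A)π(B)} BA)`,
`[D₀, D₁] = -d` and `[Q₀, Q₁] = d` componentwise along `dxⁱ`, where `d` is the de Rham
differential (whose `dxⁱ`-component is `∂_{xⁱ}` under the identification of functions on
the `ΠTX` component with differential forms). -/
theorem D0_D1_bracket (i : Fin 4) (f : ASX) :
    (1 / 2 : ℝ) • (D0 (D1 i f) + D1 i (D0 f)) = -(evD i f) ∧
    (1 / 2 : ℝ) • (Q0 (Q1 i f) + Q1 i (Q0 f)) = evD i f := by
  have bracket (s : ℝ) (A₀ A₁ : ASX → ASX) (h₀ : ∀ g, A₀ g = D0ₗ s g)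
      (h₁ : ∀ g, A₁ g = D1ₗ s i g) : (1 / 2 : ℝ) • (A₀ (A₁ f) + A₁ (A₀ f)) = s • evD i f := by
    rw [h₀, h₁, h₁, h₀, ← Module.End.mul_apply, ← Module.End.mul_apply, ← LinearMap.add_apply,
      D0ₗ_anticomm_D1ₗ, LinearMap.smul_apply, LinearMap.add_apply, coe_evDₗ]
    module
  exact ⟨by simpa using bracket (-1) D0 (D1 i) D0_eq (D1_eq i),
    by simpa using bracket 1 Q0 (Q1 i) Q0_eq (Q1_eq i)⟩

end
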